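/- arXiv:1605.00471 — 7 statements merged into one kernel-verified Lean document; each statement's English description precedes it below -/
import Mathlib

section
/- Let G be a finite simple graph and x a vertex of G. Let C be a minimal vertex cover of G with x ∉ C, and let y be a neighbour of x. Then all neighbours of y other than x belong to C if and only if C \ {y} is a minimal vertex cover of the graph obtained from G by deleting the edge xy. -/
open SimpleGraph MvPolynomial

/-- `C` is a vertex cover of `G`. -/
def IsVC {V : Type*} (G : SimpleGraph V) (C : Set V) : Prop :=
  ∀ ⦃u v : V⦄, G.Adj u v → u ∈ C ∨ v ∈ C

/-- `C` is a minimal vertex cover of `G`. -/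
def IsMinVC {V : Type*} (G : SimpleGraph V) (C : Set V) : Prop :=
  IsVC G C ∧ ∀ D ⊂ C, ¬ IsVC G D

/-- `C` is a maximum minimal vertex cover of `G`. -/
def IsMaxMinVC {V : Type*} [Fintype V] (G : SimpleGraph V) (C : Set V) : Prop :=
  IsMinVC G C ∧ ∀ D : Set V, IsMinVC G D → D.ncard ≤ C.ncard


/-- A neighbour `y` of `x` is redundant in the minimal vertex cover `C` (with `x ∉ C`)
iff `C \ {y}` is a minimal vertex cover of `G` minus the edge `xy`. -/
theorem stmt_0 {V : Type*} (G : SimpleGraph V) (x y : V) (C : Set V)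
    (hC : IsMinVC G C) (hx : x ∉ C) (hxy : G.Adj x y) :
    (∀ z : V, G.Adj y z → z ≠ x → z ∈ C) ↔
      IsMinVC (G.deleteEdges {s(x, y)}) (C \ {y}) := by
  have hyC : y ∈ C := (hC.1 hxy).resolve_left hx
  constructor
  · intro hred
    constructor
    · intro u v huv
      rw [SimpleGraph.deleteEdges_adj, Set.mem_singleton_iff] at huv
      obtain ⟨hadj, hne⟩ := huv
      rcases hC.1 hadj with hu | hv
      · by_cases huy : u = y
        · subst huy
          right
          refine ⟨hred v hadj ?_, fun hv => hadj.ne hv.symm⟩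
          rintro rfl
          exact hne (Sym2.eq_swap)
        · exact Or.inl ⟨hu, huy⟩
      · by_cases hvy : v = y
        · subst hvy
          left
          refine ⟨hred u hadj.symm ?_, fun hu => hadj.ne hu⟩
          rintro rfl
          exact hne rfl
        · exact Or.inr ⟨hv, hvy⟩
    · intro D hD hDvc
      obtain ⟨hDsub, hns⟩ := hD
      obtain ⟨w, hwC, hwD⟩ := Set.not_subset.mp hns
      refine hC.2 (D ∪ {y}) ⟨?_, fun hsub => ?_⟩ ?_
      · rintro a (ha | rfl)
        · exact (hDsub ha).1
        · exact hyC
      · rcases hsub hwC.1 with h | h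
        · exact hwD h
        · exact hwC.2 h
      · intro u v huv
        by_cases he : s(u, v) = s(x, y)
        · rcases Sym2.eq_iff.mp he with ⟨rfl, rfl⟩ | ⟨rfl, rfl⟩
          · exact Or.inr (Or.inr rfl)
          · exact Or.inl (Or.inr rfl)
        · rcases hDvc (by rw [SimpleGraph.deleteEdges_adj, Set.mem_singleton_iff]; exact ⟨huv, he⟩) with h | h
          · exact Or.inl (Or.inl h)
          · exact Or.inr (Or.inl h)
  · intro h z hyz hzx
    by_contra hz
    have hadj : (G.deleteEdges {s(x, y)}).Adj y z := by
      rw [SimpleGraph.deleteEdges_adj, Set.mem_singleton_iff]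
      refine ⟨hyz, fun he => ?_⟩
      rcases Sym2.eq_iff.mp he with ⟨h1, h2⟩ | ⟨h1, h2⟩
      · exact hxy.ne h1.symm
      · exact hzx h2
    rcases h.1 hadj with h' | h'
    · exact h'.2 rfl
    · exact hz h'.1
end

section
/- Let G be a finite simple graph and G₁ a subgraph of G such that the vertex sets of G₁ and of G \ G₁ intersect in exactly one vertex x. Suppose every maximum minimal vertex cover of G₁ contains x. Let C be a maximum minimal vertex cover of G and D₁ = C ∩ V(G₁). Then |D₁| ≤ b₁, where b₁ is the size of a maximum minimal vertex cover of G₁; moreover if x ∈ C then |D₁| = b₁. -/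
open SimpleGraph MvPolynomial

lemma vc_private {V : Type*} {G : SimpleGraph V} {C : Set V} (h : IsMinVC G C)
    {v : V} (hv : v ∈ C) : ∃ u, G.Adj v u ∧ u ∉ C := by
  by_contra hcon
  push_neg at hcon
  apply h.2 (C \ {v}) (Set.sdiff_singleton_ssubset.mpr hv)
  intro a b hab
  rcases h.1 hab with ha | hb
  · rcases eq_or_ne a v with rfl | hav
    · exact Or.inr ⟨hcon b hab, hab.ne'⟩
    · exact Or.inl ⟨ha, hav⟩
  · rcases eq_or_ne b v with rfl | hbv
    · exact Or.inl ⟨hcon a hab.symm, hab.ne⟩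
    · exact Or.inr ⟨hb, hbv⟩

lemma min_of_private {V : Type*} {G : SimpleGraph V} {C : Set V} (hVC : IsVC G C)
    (h : ∀ v ∈ C, ∃ u, G.Adj v u ∧ u ∉ C) : IsMinVC G C := by
  refine ⟨hVC, fun D hD hDVC => ?_⟩
  obtain ⟨v, hvC, hvD⟩ := Set.exists_of_ssubset hD
  obtain ⟨u, hadj, huC⟩ := h v hvC
  rcases hDVC hadj with h1 | h2
  · exact hvD h1
  · exact huC (hD.1 h2)

lemma minvc_subset_support {V : Type*} {G : SimpleGraph V} {C : Set V}
    (h : IsMinVC G C) : C ⊆ G.support := fun v hv => by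
  obtain ⟨u, hadj, _⟩ := vc_private h hv
  exact ⟨u, hadj⟩

/-- Lemma on induced covers: if every maximum minimal vertex cover of the subgraph `G₁`
contains the unique common vertex `x` of `G₁` and `G \ G₁`, then the cover induced by a
maximum minimal vertex cover `C` of `G` on `G₁` has at most `|C₁|` elements, with
equality if `x ∈ C`. -/
theorem stmt_1 {V : Type*} [Fintype V] (G G₁ : SimpleGraph V) (x : V)
    (hle : G₁ ≤ G)
    (hx : G₁.support ∩ (G \ G₁).support = {x})
    (hall : ∀ C₁ : Set V, IsMaxMinVC G₁ C₁ → x ∈ C₁)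
    (C : Set V) (hC : IsMaxMinVC G C)
    (C₁ : Set V) (hC₁ : IsMaxMinVC G₁ C₁) :
    (C ∩ G₁.support).ncard ≤ C₁.ncard ∧
      (x ∈ C → (C ∩ G₁.support).ncard = C₁.ncard) := by
  classical
  set D₁ : Set V := C ∩ G₁.support with hD₁def
  -- every edge of G at a vertex of supp(G₁) other than x lies in G₁
  have only_x : ∀ v, v ∈ G₁.support → v ≠ x → ∀ u, G.Adj v u → G₁.Adj v u := by
    intro v hv hvx u hadj
    by_contra h
    apply hvx
    have hmem : v ∈ G₁.support ∩ (G \ G₁).support :=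
      ⟨hv, ⟨u, (SimpleGraph.sdiff_adj _ _ _ _).mpr ⟨hadj, h⟩⟩⟩
    rw [hx] at hmem
    exact hmem
  -- private edges for vertices of D₁ other than x, inside G₁, avoiding C
  have priv1 : ∀ v ∈ D₁, v ≠ x → ∃ u, G₁.Adj v u ∧ u ∉ C := by
    intro v hv hvx
    obtain ⟨u, hadj, huC⟩ := vc_private hC.1 hv.1
    exact ⟨u, only_x v hv.2 hvx u hadj, huC⟩
  -- D₁ is a vertex cover of G₁
  have hD₁VC : IsVC G₁ D₁ := by
    intro u v huv
    rcases hC.1.1 (hle huv) with h1 | h2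
    · exact Or.inl ⟨h1, ⟨v, huv⟩⟩
    · exact Or.inr ⟨h2, ⟨u, huv.symm⟩⟩
  have hxC₁ : x ∈ C₁ := hall C₁ hC₁
  -- Part 1
  have part1 : D₁.ncard ≤ C₁.ncard := by
    by_cases hmin : IsMinVC G₁ D₁
    · exact hC₁.2 D₁ hmin
    · -- D₁ is not minimal; the only removable vertex is x
      have : ∃ D, D ⊂ D₁ ∧ IsVC G₁ D := by
        by_contra hcon
        push_neg at hcon
        exact hmin ⟨hD₁VC, fun D hD hDVC => hcon D hD hDVC⟩
      obtain ⟨D, hDss, hDVC⟩ := this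
      have hdiff : D₁ \ D ⊆ {x} := by
        intro v ⟨hvD₁, hvD⟩
        by_contra hvx
        obtain ⟨u, hadj, huC⟩ := priv1 v hvD₁ hvx
        rcases hDVC hadj with h1 | h2
        · exact hvD h1
        · exact huC (hDss.1.trans Set.inter_subset_left h2)
      obtain ⟨v, hvD₁, hvD⟩ := Set.exists_of_ssubset hDss
      have hvx : v = x := hdiff ⟨hvD₁, hvD⟩
      subst hvx
      -- D ⊆ D₁ \ {v}, so D₁ \ {v} is a vertex cover
      have hDsub : D ⊆ D₁ \ {v} := fun w hw =>
        ⟨hDss.1 hw, fun hwv => hvD (hwv ▸ hw)⟩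
      have hVC' : IsVC G₁ (D₁ \ {v}) := fun a b hab =>
        (hDVC hab).imp (fun h => hDsub h) (fun h => hDsub h)
      have hmin' : IsMinVC G₁ (D₁ \ {v}) := by
        apply min_of_private hVC'
        intro w hw
        obtain ⟨u, hadj, huC⟩ := priv1 w hw.1 hw.2
        exact ⟨u, hadj, fun hu => huC hu.1.1⟩
      have hle' : (D₁ \ {v}).ncard ≤ C₁.ncard := hC₁.2 _ hmin'
      have hne : (D₁ \ {v}).ncard ≠ C₁.ncard := by
        intro heq
        have hmax : IsMaxMinVC G₁ (D₁ \ {v}) :=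
          ⟨hmin', fun D' hD' => heq ▸ hC₁.2 D' hD'⟩
        exact (hall _ hmax).2 rfl
      have hcard : (D₁ \ {v}).ncard + 1 = D₁.ncard :=
        Set.ncard_diff_singleton_add_one hvD₁ (Set.toFinite _)
      omega
  refine ⟨part1, fun hxC => ?_⟩
  -- Part 2: swap argument
  have hC₁sub : C₁ ⊆ G₁.support := minvc_subset_support hC₁.1
  set C' : Set V := C₁ ∪ (C \ G₁.support) with hC'def
  -- C' is a vertex cover of G
  have hC'VC : IsVC G C' := by
    intro u v huv
    by_cases h1 : G₁.Adj u v
    · exact (hC₁.1.1 h1).imp Or.inl Or.inl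
    · have hsd : (G \ G₁).Adj u v := (SimpleGraph.sdiff_adj _ _ _ _).mpr ⟨huv, h1⟩
      have key : ∀ a b, (G \ G₁).Adj a b → a ∈ C → a ∈ C' := by
        intro a b hab haC
        by_cases hs : a ∈ G₁.support
        · have : a ∈ G₁.support ∩ (G \ G₁).support := ⟨hs, ⟨b, hab⟩⟩
          rw [hx] at this
          exact Or.inl (this ▸ hxC₁)
        · exact Or.inr ⟨haC, hs⟩
      rcases hC.1.1 huv with h | h
      · exact Or.inl (key u v hsd h)
      · exact Or.inr (key v u hsd.symm h)
  -- C' is minimal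
  have hC'min : IsMinVC G C' := by
    apply min_of_private hC'VC
    intro v hv
    rcases hv with hv | hv
    · obtain ⟨u, hadj, huC₁⟩ := vc_private hC₁.1 hv
      refine ⟨u, hle hadj, ?_⟩
      rintro (h | h)
      · exact huC₁ h
      · exact h.2 ⟨v, hadj.symm⟩
    · obtain ⟨u, hadj, huC⟩ := vc_private hC.1 hv.1
      refine ⟨u, hadj, ?_⟩
      rintro (h | h)
      · -- u ∈ C₁ ⊆ supp G₁, and u is an endpoint of an edge of G \ G₁, so u = x ∈ C
        have hsd : (G \ G₁).Adj v u := (SimpleGraph.sdiff_adj _ _ _ _).mpr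
          ⟨hadj, fun hA => hv.2 ⟨u, hA⟩⟩
        have : u ∈ G₁.support ∩ (G \ G₁).support := ⟨hC₁sub h, ⟨v, hsd.symm⟩⟩
        rw [hx] at this
        exact huC (this ▸ hxC)
      · exact huC h.1
  -- cardinalities
  have hdisj : Disjoint C₁ (C \ G₁.support) :=
    Set.disjoint_left.mpr fun a ha hb => hb.2 (hC₁sub ha)
  have hcard1 : C'.ncard = C₁.ncard + (C \ G₁.support).ncard :=
    Set.ncard_union_eq hdisj (Set.toFinite _) (Set.toFinite _)
  have hcard2 : C.ncard = D₁.ncard + (C \ G₁.support).ncard := by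
    rw [← Set.ncard_union_eq (Set.disjoint_left.mpr fun a ha hb => hb.2 ha.2)
      (Set.toFinite _) (Set.toFinite _)]
    congr 1
    rw [hD₁def]
    ext a
    simp only [Set.mem_union, Set.mem_inter_iff, Set.mem_diff]
    tauto
  have hle' : C'.ncard ≤ C.ncard := hC.2 C' hC'min
  omega
end

section
/- Let G₁ and G₂ be finite simple graphs whose vertex sets intersect in exactly one vertex x. If there exist maximum minimal vertex covers C₁ of G₁ and C₂ of G₂ with x ∉ C₁ and x ∉ C₂, then C₁ ∪ C₂ is a maximum minimal vertex cover of the union G₁ ∪ G₂, and C₁, C₂ are disjoint. -/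
open SimpleGraph MvPolynomial

/-- Private-edge characterization of minimal vertex covers. -/
lemma isMinVC_iff {V : Type*} (G : SimpleGraph V) (C : Set V) :
    IsMinVC G C ↔ IsVC G C ∧ ∀ v ∈ C, ∃ u, G.Adj v u ∧ u ∉ C := by
  constructor
  · rintro ⟨hvc, hmin⟩
    refine ⟨hvc, fun v hv => ?_⟩
    have hss : C \ {v} ⊂ C := by
      rw [Set.ssubset_def]
      exact ⟨Set.diff_subset, fun hsub => (hsub hv).2 rfl⟩
    have hnv : ¬ IsVC G (C \ {v}) := hmin _ hss
    rw [IsVC] at hnv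
    push_neg at hnv
    obtain ⟨a, b, hab, ha, hb⟩ := hnv
    simp only [Set.mem_diff, Set.mem_singleton_iff, not_and, not_not] at ha hb
    rcases hvc hab with hA | hB
    · have hav : a = v := ha hA
      subst hav
      refine ⟨b, hab, fun hbC => ?_⟩
      exact hab.ne (hb hbC).symm
    · have hbv : b = v := hb hB
      subst hbv
      refine ⟨a, hab.symm, fun haC => ?_⟩
      exact hab.ne (ha haC)
  · rintro ⟨hvc, hpriv⟩
    refine ⟨hvc, fun D hss hDvc => ?_⟩
    obtain ⟨v, hvC, hvD⟩ := Set.exists_of_ssubset hss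
    obtain ⟨u, hadj, huC⟩ := hpriv v hvC
    rcases hDvc hadj with h | h
    · exact hvD h
    · exact huC (hss.subset h)

lemma isMinVC_subset_support {V : Type*} (G : SimpleGraph V) (C : Set V)
    (h : IsMinVC G C) : C ⊆ G.support := by
  intro v hv
  obtain ⟨u, hadj, -⟩ := ((isMinVC_iff G C).1 h).2 v hv
  exact ⟨u, hadj⟩

/-- Key side lemma: properties of `D ∩ A.support` when `D` is a minimal vertex cover
of `A ⊔ B` and the supports meet exactly in `x`. -/
lemma side_min {V : Type*} (A B : SimpleGraph V) (x : V)
    (hx : A.support ∩ B.support = {x}) (D : Set V)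
    (hD : IsMinVC (A ⊔ B) D) :
    ((∃ u, A.Adj x u ∧ u ∉ D) → x ∈ D → IsMinVC A (D ∩ A.support)) ∧
    ((x ∉ D ∨ ¬ ∃ u, A.Adj x u ∧ u ∉ D) → IsMinVC A ((D ∩ A.support) \ {x})) := by
  obtain ⟨hDvc, hDpriv⟩ := (isMinVC_iff _ _).1 hD
  have hvc : IsVC A (D ∩ A.support) := by
    intro u v h
    rcases hDvc (Or.inl h : (A ⊔ B).Adj u v) with h' | h'
    · exact Or.inl ⟨h', ⟨v, h⟩⟩
    · exact Or.inr ⟨h', ⟨u, h.symm⟩⟩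
  have hpriv : ∀ v ∈ D ∩ A.support, v ≠ x → ∃ u, A.Adj v u ∧ u ∉ D := by
    intro v hv hne
    obtain ⟨u, hadj, hu⟩ := hDpriv v hv.1
    rw [sup_adj] at hadj
    rcases hadj with h | h
    · exact ⟨u, h, hu⟩
    · exfalso
      have : v ∈ ({x} : Set V) := hx ▸ ⟨hv.2, ⟨u, h⟩⟩
      exact hne this
  constructor
  · rintro ⟨u, hadj, huD⟩ hxD
    rw [isMinVC_iff]
    refine ⟨hvc, fun v hv => ?_⟩
    by_cases hvx : v = x
    · subst hvx
      exact ⟨u, hadj, fun hc => huD hc.1⟩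
    · obtain ⟨w, hw, hwD⟩ := hpriv v hv hvx
      exact ⟨w, hw, fun hc => hwD hc.1⟩
  · intro hcase
    rw [isMinVC_iff]
    have cover' : ∀ u v, A.Adj u v → u ∈ D ∩ A.support →
        u ∈ (D ∩ A.support) \ {x} ∨ v ∈ (D ∩ A.support) \ {x} := by
      intro u v h hu
      by_cases hux : u = x
      · rcases hcase with h1 | h1
        · exact absurd (hux ▸ hu.1) h1
        · push_neg at h1
          have hvD : v ∈ D := h1 v (hux ▸ h)
          have hvx : v ≠ x := fun hc => h.ne (hux.trans hc.symm)
          exact Or.inr ⟨⟨hvD, ⟨u, h.symm⟩⟩, hvx⟩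
      · exact Or.inl ⟨hu, hux⟩
    constructor
    · intro u v h
      rcases hvc h with hu | hv
      · exact cover' u v h hu
      · rcases cover' v u h.symm hv with h' | h'
        · exact Or.inr h'
        · exact Or.inl h'
    · intro v hv
      obtain ⟨u, hw, hwD⟩ := hpriv v hv.1 hv.2
      exact ⟨u, hw, fun hc => hwD hc.1.1⟩

/-- If `G₁` and `G₂` share exactly the vertex `x` and there are maximum minimal vertex
covers `C₁`, `C₂` avoiding `x`, then `C₁ ∪ C₂` is a maximum minimal vertex cover of
`G₁ ∪ G₂`, and `C₁`, `C₂` are disjoint. -/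
theorem stmt_2 {V : Type*} [Fintype V] (G₁ G₂ : SimpleGraph V) (x : V)
    (hx : G₁.support ∩ G₂.support = {x})
    (C₁ C₂ : Set V) (h₁ : IsMaxMinVC G₁ C₁) (h₂ : IsMaxMinVC G₂ C₂)
    (hx₁ : x ∉ C₁) (hx₂ : x ∉ C₂) :
    IsMaxMinVC (G₁ ⊔ G₂) (C₁ ∪ C₂) ∧ Disjoint C₁ C₂ := by
  have hC₁s : C₁ ⊆ G₁.support := isMinVC_subset_support _ _ h₁.1
  have hC₂s : C₂ ⊆ G₂.support := isMinVC_subset_support _ _ h₂.1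
  have hxs : x ∈ G₁.support ∩ G₂.support := by rw [hx]; rfl
  have hdisj : Disjoint C₁ C₂ := by
    rw [Set.disjoint_left]
    intro a ha1 ha2
    have hax : a ∈ G₁.support ∩ G₂.support := ⟨hC₁s ha1, hC₂s ha2⟩
    rw [hx, Set.mem_singleton_iff] at hax
    exact hx₁ (hax ▸ ha1)
  refine ⟨⟨?_, ?_⟩, hdisj⟩
  · -- C₁ ∪ C₂ is a minimal vertex cover of G₁ ⊔ G₂
    rw [isMinVC_iff]
    constructor
    · intro u v h
      rw [sup_adj] at h
      rcases h with h | h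
      · rcases h₁.1.1 h with h' | h'
        · exact Or.inl (Or.inl h')
        · exact Or.inr (Or.inl h')
      · rcases h₂.1.1 h with h' | h'
        · exact Or.inl (Or.inr h')
        · exact Or.inr (Or.inr h')
    · intro v hv
      rcases hv with hv | hv
      · obtain ⟨u, hadj, hu₁⟩ := ((isMinVC_iff _ _).1 h₁.1).2 v hv
        have hu₂ : u ∉ C₂ := by
          intro hc
          have : u ∈ G₁.support ∩ G₂.support := ⟨⟨v, hadj.symm⟩, hC₂s hc⟩
          rw [hx, Set.mem_singleton_iff] at this
          exact hx₂ (this ▸ hc)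
        exact ⟨u, (by rw [sup_adj]; exact Or.inl hadj), fun hc => hc.elim hu₁ hu₂⟩
      · obtain ⟨u, hadj, hu₂⟩ := ((isMinVC_iff _ _).1 h₂.1).2 v hv
        have hu₁ : u ∉ C₁ := by
          intro hc
          have : u ∈ G₁.support ∩ G₂.support := ⟨hC₁s hc, ⟨v, hadj.symm⟩⟩
          rw [hx, Set.mem_singleton_iff] at this
          exact hx₁ (this ▸ hc)
        exact ⟨u, (by rw [sup_adj]; exact Or.inr hadj), fun hc => hc.elim hu₁ hu₂⟩
  · -- maximality
    intro D hD
    obtain ⟨hDvc, hDpriv⟩ := (isMinVC_iff _ _).1 hD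
    obtain ⟨hL3A, hL4A⟩ := side_min G₁ G₂ x hx D hD
    have hx' : G₂.support ∩ G₁.support = {x} := by rw [Set.inter_comm]; exact hx
    have hD' : IsMinVC (G₂ ⊔ G₁) D := by rwa [sup_comm]
    obtain ⟨hL3B, hL4B⟩ := side_min G₂ G₁ x hx' D hD'
    set D₁ := D ∩ G₁.support with hD₁def
    set D₂ := D ∩ G₂.support with hD₂def
    have hDsub : D ⊆ D₁ ∪ D₂ := by
      intro v hv
      obtain ⟨u, hadj, -⟩ := hDpriv v hv
      rw [sup_adj] at hadj
      rcases hadj with h | h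
      · exact Or.inl ⟨hv, ⟨u, h⟩⟩
      · exact Or.inr ⟨hv, ⟨u, h⟩⟩
    have hcard : (C₁ ∪ C₂).ncard = C₁.ncard + C₂.ncard :=
      Set.ncard_union_eq hdisj (Set.toFinite _) (Set.toFinite _)
    rw [hcard]
    by_cases hxD : x ∈ D
    · obtain ⟨u, hadj, huD⟩ := hDpriv x hxD
      rw [sup_adj] at hadj
      by_cases hP₁ : ∃ u, G₁.Adj x u ∧ u ∉ D
      · by_cases hP₂ : ∃ u, G₂.Adj x u ∧ u ∉ D
        · have m₁ : D₁.ncard ≤ C₁.ncard := h₁.2 _ (hL3A hP₁ hxD)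
          have m₂ : D₂.ncard ≤ C₂.ncard := h₂.2 _ (hL3B hP₂ hxD)
          calc D.ncard ≤ (D₁ ∪ D₂).ncard := Set.ncard_le_ncard hDsub (Set.toFinite _)
            _ ≤ D₁.ncard + D₂.ncard := Set.ncard_union_le _ _
            _ ≤ C₁.ncard + C₂.ncard := Nat.add_le_add m₁ m₂
        · have m₁ : D₁.ncard ≤ C₁.ncard := h₁.2 _ (hL3A hP₁ hxD)
          have m₂ : (D₂ \ {x}).ncard ≤ C₂.ncard := h₂.2 _ (hL4B (Or.inr hP₂))
          have hsub : D ⊆ D₁ ∪ (D₂ \ {x}) := by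
            intro v hv
            rcases hDsub hv with h | h
            · exact Or.inl h
            · by_cases hvx : v = x
              · exact Or.inl ⟨hv, hvx ▸ hxs.1⟩
              · exact Or.inr ⟨h, hvx⟩
          calc D.ncard ≤ (D₁ ∪ (D₂ \ {x})).ncard :=
                Set.ncard_le_ncard hsub (Set.toFinite _)
            _ ≤ D₁.ncard + (D₂ \ {x}).ncard := Set.ncard_union_le _ _
            _ ≤ C₁.ncard + C₂.ncard := Nat.add_le_add m₁ m₂
      · have hP₂ : ∃ u, G₂.Adj x u ∧ u ∉ D := by
          rcases hadj with h | h
          · exact absurd ⟨u, h, huD⟩ hP₁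
          · exact ⟨u, h, huD⟩
        have m₁ : (D₁ \ {x}).ncard ≤ C₁.ncard := h₁.2 _ (hL4A (Or.inr hP₁))
        have m₂ : D₂.ncard ≤ C₂.ncard := h₂.2 _ (hL3B hP₂ hxD)
        have hsub : D ⊆ (D₁ \ {x}) ∪ D₂ := by
          intro v hv
          rcases hDsub hv with h | h
          · by_cases hvx : v = x
            · exact Or.inr ⟨hv, hvx ▸ hxs.2⟩
            · exact Or.inl ⟨h, hvx⟩
          · exact Or.inr h
        calc D.ncard ≤ ((D₁ \ {x}) ∪ D₂).ncard :=
              Set.ncard_le_ncard hsub (Set.toFinite _)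
          _ ≤ (D₁ \ {x}).ncard + D₂.ncard := Set.ncard_union_le _ _
          _ ≤ C₁.ncard + C₂.ncard := Nat.add_le_add m₁ m₂
    · have m₁ : (D₁ \ {x}).ncard ≤ C₁.ncard := h₁.2 _ (hL4A (Or.inl hxD))
      have m₂ : (D₂ \ {x}).ncard ≤ C₂.ncard := h₂.2 _ (hL4B (Or.inl hxD))
      have hsub : D ⊆ (D₁ \ {x}) ∪ (D₂ \ {x}) := by
        intro v hv
        have hvx : v ≠ x := fun hc => hxD (hc ▸ hv)
        rcases hDsub hv with h | h
        · exact Or.inl ⟨h, hvx⟩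
        · exact Or.inr ⟨h, hvx⟩
      calc D.ncard ≤ ((D₁ \ {x}) ∪ (D₂ \ {x})).ncard :=
            Set.ncard_le_ncard hsub (Set.toFinite _)
        _ ≤ (D₁ \ {x}).ncard + (D₂ \ {x}).ncard := Set.ncard_union_le _ _
        _ ≤ C₁.ncard + C₂.ncard := Nat.add_le_add m₁ m₂
end

section
/- Let G₁ and G₂ be finite simple graphs whose vertex sets intersect in exactly one vertex x. If every maximum minimal vertex cover of G₁ contains x and every maximum minimal vertex cover of G₂ contains x, then for any such covers C₁, C₂ the set C₁ ∪ C₂ is a maximum minimal vertex cover of G₁ ∪ G₂, and every maximum minimal vertex cover of G₁ ∪ G₂ contains x. -/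
open SimpleGraph MvPolynomial

/-!
A minimal vertex cover `D` of `G₁ ∪ G₂` restricts to a vertex cover `D₁ = D ∩ supp G₁` of `G₁`
in which every vertex other than the cut vertex `x` keeps a private neighbour outside `D₁`.
So either `D₁` or `D₁ \ {x}` is a minimal vertex cover of `G₁`. Since every maximum minimal
vertex cover of `G₁` contains `x`, a minimal cover avoiding `x` is strictly smaller than the
maximum `|C₁|`; in both cases `|D₁| ≤ |C₁|`, strictly if `x ∉ D`. Adding the two sides, and
counting `x` once, `|D| ≤ |C₁ ∪ C₂|`, strictly if `x ∉ D`. As `C₁ ∪ C₂` is itself a minimal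
cover of `G₁ ∪ G₂` (private neighbours survive because the supports meet only in `x ∈ C₁ ∩ C₂`),
it is maximum, and no maximum minimal cover of `G₁ ∪ G₂` can avoid `x`.
-/

section VertexCover

variable {V : Type*} {G G₁ G₂ : SimpleGraph V} {C C₁ C₂ D : Set V} {x : V}

lemma IsVC.sdiff_singleton {v : V} (hC : IsVC G C) (hv : ∀ u, G.Adj v u → u ∈ C) :
    IsVC G (C \ {v}) := by
  intro a b hab
  by_cases hav : a = v
  · subst hav
    exact Or.inr ⟨hv b hab, hab.ne.symm⟩
  by_cases hbv : b = v
  · subst hbv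
    exact Or.inl ⟨hv a hab.symm, hab.ne⟩
  exact (hC hab).imp (fun h => ⟨h, hav⟩) (fun h => ⟨h, hbv⟩)

lemma IsMinVC.exists_adj_notMem (hC : IsMinVC G C) {v : V} (hv : v ∈ C) :
    ∃ u, G.Adj v u ∧ u ∉ C := by
  by_contra! h
  exact hC.2 _ (Set.sdiff_singleton_ssubset.mpr hv) (hC.1.sdiff_singleton h)

lemma IsVC.isMinVC (hC : IsVC G C) (h : ∀ v ∈ C, ∃ u, G.Adj v u ∧ u ∉ C) : IsMinVC G C := by
  refine ⟨hC, fun D hDC hD => ?_⟩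
  obtain ⟨v, hvC, hvD⟩ := Set.exists_of_ssubset hDC
  obtain ⟨u, hvu, huC⟩ := h v hvC
  exact (hD hvu).elim hvD fun hu => huC (hDC.1 hu)

lemma IsMinVC.subset_support (hC : IsMinVC G C) : C ⊆ G.support := fun _ hv =>
  let ⟨u, hvu, _⟩ := hC.exists_adj_notMem hv
  ⟨u, hvu⟩

lemma exists_isMinVC [Finite V] (G : SimpleGraph V) : ∃ C, IsMinVC G C := by
  obtain ⟨C, hC⟩ := Set.Finite.exists_minimal (s := {C | IsVC G C}) (Set.toFinite _)
    ⟨Set.univ, fun _ _ _ => Or.inl trivial⟩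
  exact ⟨C, hC.prop, fun D hDC hD => hDC.2 (hC.2 hD hDC.1)⟩

lemma exists_isMaxMinVC [Fintype V] (G : SimpleGraph V) : ∃ C, IsMaxMinVC G C := by
  obtain ⟨C, hC, hmax⟩ := Set.exists_max_image {C | IsMinVC G C} Set.ncard (Set.toFinite _)
    (exists_isMinVC G)
  exact ⟨C, hC, hmax⟩

lemma IsMaxMinVC.ncard_lt_of_notMem [Fintype V] (hall : ∀ C, IsMaxMinVC G C → x ∈ C)
    (hC : IsMaxMinVC G C) (hD : IsMinVC G D) (hxD : x ∉ D) : D.ncard < C.ncard := by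
  by_contra! h
  exact hxD (hall D ⟨hD, fun E hE => (hC.2 E hE).trans h⟩)

lemma IsVC.inter_support_of_sup (hD : IsVC (G₁ ⊔ G₂) D) : IsVC G₁ (D ∩ G₁.support) :=
  fun u v huv => (hD ((sup_adj G₁ G₂ u v).mpr (Or.inl huv))).imp
    (fun h => ⟨h, v, huv⟩) (fun h => ⟨h, u, huv.symm⟩)

lemma IsMinVC.inter_support_of_sup (hx : G₁.support ∩ G₂.support ⊆ {x})
    (hD : IsMinVC (G₁ ⊔ G₂) D) :
    IsMinVC G₁ (D ∩ G₁.support) ∨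
      x ∈ D ∩ G₁.support ∧ IsMinVC G₁ ((D ∩ G₁.support) \ {x}) := by
  set D₁ := D ∩ G₁.support
  have hpriv : ∀ v ∈ D₁, v ≠ x → ∃ u, G₁.Adj v u ∧ u ∉ D₁ := by
    rintro v ⟨hvD, hvG⟩ hvx
    obtain ⟨u, hvu, huD⟩ := hD.exists_adj_notMem hvD
    refine ⟨u, ?_, fun hu => huD hu.1⟩
    exact ((sup_adj G₁ G₂ v u).mp hvu).resolve_right fun hH => hvx (hx ⟨hvG, u, hH⟩)
  by_cases hx₁ : x ∈ D₁ ∧ ∀ u, G₁.Adj x u → u ∈ D₁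
  · refine Or.inr ⟨hx₁.1, (hD.1.inter_support_of_sup.sdiff_singleton hx₁.2).isMinVC ?_⟩
    rintro v ⟨hv, hvx⟩
    obtain ⟨u, hvu, hu⟩ := hpriv v hv hvx
    exact ⟨u, hvu, fun h => hu h.1⟩
  · refine Or.inl (hD.1.inter_support_of_sup.isMinVC fun v hv => ?_)
    by_cases hvx : v = x
    · subst hvx
      by_contra! h
      exact hx₁ ⟨hv, h⟩
    · exact hpriv v hv hvx

lemma IsMinVC.ncard_inter_support_le [Fintype V] (hx : G₁.support ∩ G₂.support ⊆ {x})
    (hall : ∀ C, IsMaxMinVC G₁ C → x ∈ C) (hC : IsMaxMinVC G₁ C)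
    (hD : IsMinVC (G₁ ⊔ G₂) D) :
    (D ∩ G₁.support).ncard ≤ C.ncard ∧ (x ∉ D → (D ∩ G₁.support).ncard < C.ncard) := by
  rcases hD.inter_support_of_sup hx with hmin | ⟨hxD, hmin⟩
  · exact ⟨hC.2 _ hmin, fun hxD => hC.ncard_lt_of_notMem hall hmin fun h => hxD h.1⟩
  · have hcard := Set.ncard_sdiff_singleton_add_one hxD
    have hlt := hC.ncard_lt_of_notMem hall hmin fun h => h.2 rfl
    exact ⟨by omega, fun h => absurd hxD.1 h⟩

lemma IsMinVC.sup (hC₁ : IsMinVC G₁ C₁) (hC₂ : IsMinVC G₂ C₂)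
    (h : G₁.support ∩ G₂.support ⊆ C₁ ∩ C₂) : IsMinVC (G₁ ⊔ G₂) (C₁ ∪ C₂) := by
  refine IsVC.isMinVC (fun u v huv => ?_) fun v hv => ?_
  · rcases (sup_adj G₁ G₂ u v).mp huv with huv | huv
    · exact (hC₁.1 huv).imp Or.inl Or.inl
    · exact (hC₂.1 huv).imp Or.inr Or.inr
  rcases hv with hv | hv
  · obtain ⟨u, hvu, huC⟩ := hC₁.exists_adj_notMem hv
    refine ⟨u, (sup_adj G₁ G₂ v u).mpr (Or.inl hvu), ?_⟩
    rintro (hu | hu)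
    exacts [huC hu, huC (h ⟨⟨v, hvu.symm⟩, hC₂.subset_support hu⟩).1]
  · obtain ⟨u, hvu, huC⟩ := hC₂.exists_adj_notMem hv
    refine ⟨u, (sup_adj G₁ G₂ v u).mpr (Or.inr hvu), ?_⟩
    rintro (hu | hu)
    exacts [huC (h ⟨hC₁.subset_support hu, ⟨v, hvu.symm⟩⟩).2, huC hu]

lemma ncard_union_add_one [Finite V] (hx : G₁.support ∩ G₂.support = {x})
    (hC₁ : IsMinVC G₁ C₁) (hC₂ : IsMinVC G₂ C₂) (hx₁ : x ∈ C₁) (hx₂ : x ∈ C₂) :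
    (C₁ ∪ C₂).ncard + 1 = C₁.ncard + C₂.ncard := by
  have hinter : C₁ ∩ C₂ = {x} :=
    (hx ▸ Set.inter_subset_inter hC₁.subset_support hC₂.subset_support).antisymm
      (Set.singleton_subset_iff.mpr ⟨hx₁, hx₂⟩)
  simpa [hinter] using Set.ncard_union_add_ncard_inter C₁ C₂

lemma Set.ncard_add_ncard_inter_inter_of_subset_union [Finite V] {A B : Set V} (h : D ⊆ A ∪ B) :
    D.ncard + (D ∩ (A ∩ B)).ncard = (D ∩ A).ncard + (D ∩ B).ncard := by
  have := Set.ncard_union_add_ncard_inter (D ∩ A) (D ∩ B)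
  rwa [← Set.inter_union_distrib_left, Set.inter_eq_left.mpr h,
    ← Set.inter_inter_distrib_left] at this

lemma IsMinVC.ncard_le_ncard_union [Fintype V] (hx : G₁.support ∩ G₂.support = {x})
    (hall₁ : ∀ C, IsMaxMinVC G₁ C → x ∈ C) (hall₂ : ∀ C, IsMaxMinVC G₂ C → x ∈ C)
    (hC₁ : IsMaxMinVC G₁ C₁) (hC₂ : IsMaxMinVC G₂ C₂) (hD : IsMinVC (G₁ ⊔ G₂) D) :
    D.ncard ≤ (C₁ ∪ C₂).ncard ∧ (x ∉ D → D.ncard < (C₁ ∪ C₂).ncard) := by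
  have hunion := ncard_union_add_one hx hC₁.1 hC₂.1 (hall₁ _ hC₁) (hall₂ _ hC₂)
  have hsplit := Set.ncard_add_ncard_inter_inter_of_subset_union
    (A := G₁.support) (B := G₂.support) fun v hv =>
      (hD.exists_adj_notMem hv).elim fun u ⟨hvu, _⟩ =>
        ((sup_adj G₁ G₂ v u).mp hvu).imp (fun h => ⟨u, h⟩) (fun h => ⟨u, h⟩)
  rw [hx] at hsplit
  obtain ⟨h₁, h₁'⟩ := hD.ncard_inter_support_le hx.subset hall₁ hC₁
  obtain ⟨h₂, h₂'⟩ := (sup_comm G₁ G₂ ▸ hD).ncard_inter_support_le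
    (Set.inter_comm G₁.support _ ▸ hx.subset) hall₂ hC₂
  by_cases hxD : x ∈ D
  · rw [Set.inter_singleton_of_mem hxD, Set.ncard_singleton] at hsplit
    exact ⟨by omega, absurd hxD⟩
  · rw [Set.inter_singleton_eq_empty.mpr hxD, Set.ncard_empty] at hsplit
    have := h₁' hxD
    have := h₂' hxD
    exact ⟨by omega, fun _ => by omega⟩

lemma IsMaxMinVC.sup [Fintype V] (hx : G₁.support ∩ G₂.support = {x})
    (hall₁ : ∀ C, IsMaxMinVC G₁ C → x ∈ C) (hall₂ : ∀ C, IsMaxMinVC G₂ C → x ∈ C)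
    (hC₁ : IsMaxMinVC G₁ C₁) (hC₂ : IsMaxMinVC G₂ C₂) : IsMaxMinVC (G₁ ⊔ G₂) (C₁ ∪ C₂) :=
  ⟨hC₁.1.sup hC₂.1 (hx ▸ Set.singleton_subset_iff.mpr ⟨hall₁ _ hC₁, hall₂ _ hC₂⟩),
    fun _ hD => (hD.ncard_le_ncard_union hx hall₁ hall₂ hC₁ hC₂).1⟩

end VertexCover

/-- Case (i) of the gluing lemma: if every maximum minimal vertex cover of `G₁` and of
`G₂` contains the unique common vertex `x`, then for any such covers `C₁`, `C₂` the
union `C₁ ∪ C₂` is a maximum minimal vertex cover of `G₁ ∪ G₂`, and every maximum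
minimal vertex cover of `G₁ ∪ G₂` contains `x`. -/
theorem stmt_4 {V : Type*} [Fintype V] (G₁ G₂ : SimpleGraph V) (x : V)
    (hx : G₁.support ∩ G₂.support = {x})
    (hall₁ : ∀ C₁ : Set V, IsMaxMinVC G₁ C₁ → x ∈ C₁)
    (hall₂ : ∀ C₂ : Set V, IsMaxMinVC G₂ C₂ → x ∈ C₂) :
    (∀ C₁ C₂ : Set V, IsMaxMinVC G₁ C₁ → IsMaxMinVC G₂ C₂ →
        IsMaxMinVC (G₁ ⊔ G₂) (C₁ ∪ C₂)) ∧
      (∀ C : Set V, IsMaxMinVC (G₁ ⊔ G₂) C → x ∈ C) := by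
  refine ⟨fun C₁ C₂ hC₁ hC₂ => hC₁.sup hx hall₁ hall₂ hC₂, fun C hC => ?_⟩
  by_contra hxC
  obtain ⟨C₁, hC₁⟩ := exists_isMaxMinVC G₁
  obtain ⟨C₂, hC₂⟩ := exists_isMaxMinVC G₂
  have hle := hC.2 _ (hC₁.sup hx hall₁ hall₂ hC₂).1
  exact ((hC.1.ncard_le_ncard_union hx hall₁ hall₂ hC₁ hC₂).2 hxC).not_ge hle
end

section
/- Let Γ₅ be the 5-cycle on consecutive vertices x₁,…,x₅ in the polynomial ring R = k[x₁,…,x₅] over a field k. Then the edge ideal I(Γ₅) = (x₁x₂, x₂x₃, x₃x₄, x₄x₅, x₅x₁) equals the radical of the ideal generated by the three elements x₁x₂, x₂x₃ + x₄x₅, and x₁x₅ + x₃x₄. -/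
open MvPolynomial

/-- The span of a set of variables is the kernel of the evaluation sending those
variables to `0`. -/
lemma span_X_eq_ker (k : Type*) [Field k] (s : Finset (Fin 5)) :
    Ideal.span (X '' (s : Set (Fin 5)) : Set (MvPolynomial (Fin 5) k)) =
      RingHom.ker (aeval (fun i => if i ∈ s then 0 else X i) :
        MvPolynomial (Fin 5) k →ₐ[k] MvPolynomial (Fin 5) k) := by
  set g : Fin 5 → MvPolynomial (Fin 5) k := fun i => if i ∈ s then 0 else X i with hg
  apply le_antisymm
  · rw [Ideal.span_le]
    rintro _ ⟨i, hi, rfl⟩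
    simp [RingHom.mem_ker, hg, Finset.mem_coe.mp hi]
  · intro f hf
    rw [RingHom.mem_ker] at hf
    set P : Ideal (MvPolynomial (Fin 5) k) :=
      Ideal.span (X '' (s : Set (Fin 5)) : Set (MvPolynomial (Fin 5) k)) with hP
    have key : (Ideal.Quotient.mkₐ k P).comp (aeval g) = Ideal.Quotient.mkₐ k P := by
      apply MvPolynomial.algHom_ext
      intro i
      by_cases hi : i ∈ s
      · have hXi : (X i : MvPolynomial (Fin 5) k) ∈ P :=
          Ideal.subset_span ⟨i, hi, rfl⟩
        simp [hg, hi, Ideal.Quotient.eq_zero_iff_mem.mpr hXi]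
      · simp [hg, hi]
    have : Ideal.Quotient.mkₐ k P f = 0 := by
      calc Ideal.Quotient.mkₐ k P f = (Ideal.Quotient.mkₐ k P).comp (aeval g) f := by rw [key]
      _ = Ideal.Quotient.mkₐ k P (aeval g f) := rfl
      _ = 0 := by rw [hf]; simp
    exact Ideal.Quotient.eq_zero_iff_mem.mp this

lemma isPrime_span_X (k : Type*) [Field k] (s : Finset (Fin 5)) :
    (Ideal.span (X '' (s : Set (Fin 5)) : Set (MvPolynomial (Fin 5) k))).IsPrime := by
  rw [span_X_eq_ker]
  exact RingHom.ker_isPrime _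

/-- The edge ideal of the 5-cycle is generated, up to radical, by the three elements
`x₁x₂`, `x₂x₃ + x₄x₅` and `x₁x₅ + x₃x₄` (here `xᵢ = X (i-1)`). -/
theorem stmt_8 (k : Type*) [Field k] :
    Ideal.span ({X 0 * X 1, X 1 * X 2, X 2 * X 3, X 3 * X 4, X 4 * X 0} :
        Set (MvPolynomial (Fin 5) k)) =
      (Ideal.span ({X 0 * X 1, X 1 * X 2 + X 3 * X 4, X 0 * X 4 + X 2 * X 3} :
        Set (MvPolynomial (Fin 5) k))).radical := by
  set J : Ideal (MvPolynomial (Fin 5) k) :=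
    Ideal.span ({X 0 * X 1, X 1 * X 2 + X 3 * X 4, X 0 * X 4 + X 2 * X 3} :
        Set (MvPolynomial (Fin 5) k)) with hJ
  have hg1 : (X 0 * X 1 : MvPolynomial (Fin 5) k) ∈ J :=
    Ideal.subset_span (by simp)
  have hg2 : (X 1 * X 2 + X 3 * X 4 : MvPolynomial (Fin 5) k) ∈ J :=
    Ideal.subset_span (by simp)
  have hg3 : (X 0 * X 4 + X 2 * X 3 : MvPolynomial (Fin 5) k) ∈ J :=
    Ideal.subset_span (by simp)
  -- squares of the edges lie in J
  have hb2 : (X 1 * X 2 : MvPolynomial (Fin 5) k) ^ 2 ∈ J := by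
    have h : (X 1 * X 2 : MvPolynomial (Fin 5) k) ^ 2 =
        (X 1 * X 2) * (X 1 * X 2 + X 3 * X 4)
          - (X 1 * X 4) * (X 0 * X 4 + X 2 * X 3) + (X 4 * X 4) * (X 0 * X 1) := by ring
    rw [h]
    exact add_mem (sub_mem (Ideal.mul_mem_left _ _ hg2) (Ideal.mul_mem_left _ _ hg3))
      (Ideal.mul_mem_left _ _ hg1)
  have hc2 : (X 2 * X 3 : MvPolynomial (Fin 5) k) ^ 2 ∈ J := by
    have h : (X 2 * X 3 : MvPolynomial (Fin 5) k) ^ 2 =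
        (X 2 * X 3) * (X 0 * X 4 + X 2 * X 3)
          - (X 0 * X 2) * (X 1 * X 2 + X 3 * X 4) + (X 2 * X 2) * (X 0 * X 1) := by ring
    rw [h]
    exact add_mem (sub_mem (Ideal.mul_mem_left _ _ hg3) (Ideal.mul_mem_left _ _ hg2))
      (Ideal.mul_mem_left _ _ hg1)
  have hd2 : (X 3 * X 4 : MvPolynomial (Fin 5) k) ^ 2 ∈ J := by
    have h : (X 3 * X 4 : MvPolynomial (Fin 5) k) ^ 2 =
        (X 3 * X 4 - X 1 * X 2) * (X 1 * X 2 + X 3 * X 4) + (X 1 * X 2) ^ 2 := by ring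
    rw [h]
    exact add_mem (Ideal.mul_mem_left _ _ hg2) hb2
  have he2 : (X 4 * X 0 : MvPolynomial (Fin 5) k) ^ 2 ∈ J := by
    have h : (X 4 * X 0 : MvPolynomial (Fin 5) k) ^ 2 =
        (X 0 * X 4 - X 2 * X 3) * (X 0 * X 4 + X 2 * X 3) + (X 2 * X 3) ^ 2 := by ring
    rw [h]
    exact add_mem (Ideal.mul_mem_left _ _ hg3) hc2
  apply le_antisymm
  · rw [Ideal.span_le]
    rintro f hf
    simp only [Set.mem_insert_iff, Set.mem_singleton_iff] at hf
    rcases hf with rfl | rfl | rfl | rfl | rfl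
    · exact Ideal.le_radical hg1
    · exact ⟨2, hb2⟩
    · exact ⟨2, hc2⟩
    · exact ⟨2, hd2⟩
    · exact ⟨2, he2⟩
  · -- radical J ≤ edge ideal, via the five minimal primes
    have hcover : ∀ s : Finset (Fin 5),
        (∀ g ∈ ({X 0 * X 1, X 1 * X 2 + X 3 * X 4, X 0 * X 4 + X 2 * X 3} :
            Set (MvPolynomial (Fin 5) k)),
          g ∈ Ideal.span (X '' (s : Set (Fin 5)) : Set (MvPolynomial (Fin 5) k))) →
        J.radical ≤ Ideal.span (X '' (s : Set (Fin 5)) : Set (MvPolynomial (Fin 5) k)) := by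
      intro s hs
      rw [(isPrime_span_X k s).radical_le_iff, hJ, Ideal.span_le]
      exact hs
    have hXmem : ∀ (s : Finset (Fin 5)) (i : Fin 5), i ∈ s →
        ∀ p : MvPolynomial (Fin 5) k,
        X i * p ∈ Ideal.span (X '' (s : Set (Fin 5)) : Set (MvPolynomial (Fin 5) k)) :=
      fun s i hi p => Ideal.mul_mem_right _ _ (Ideal.subset_span ⟨i, hi, rfl⟩)
    intro f hf
    have h1 := hcover {0, 1, 3} (by
      rintro g hg
      simp only [Set.mem_insert_iff, Set.mem_singleton_iff] at hg
      rcases hg with rfl | rfl | rfl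
      · exact hXmem _ 0 (by decide) _
      · exact add_mem (hXmem _ 1 (by decide) _) (hXmem _ 3 (by decide) _)
      · exact add_mem (hXmem _ 0 (by decide) _) (by
          rw [mul_comm]; exact hXmem _ 3 (by decide) _)) hf
    have h2 := hcover {0, 2, 3} (by
      rintro g hg
      simp only [Set.mem_insert_iff, Set.mem_singleton_iff] at hg
      rcases hg with rfl | rfl | rfl
      · exact hXmem _ 0 (by decide) _
      · exact add_mem (by rw [mul_comm]; exact hXmem _ 2 (by decide) _)
          (hXmem _ 3 (by decide) _)
      · exact add_mem (hXmem _ 0 (by decide) _) (hXmem _ 2 (by decide) _)) hf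
    have h3 := hcover {0, 2, 4} (by
      rintro g hg
      simp only [Set.mem_insert_iff, Set.mem_singleton_iff] at hg
      rcases hg with rfl | rfl | rfl
      · exact hXmem _ 0 (by decide) _
      · exact add_mem (by rw [mul_comm]; exact hXmem _ 2 (by decide) _)
          (by rw [mul_comm]; exact hXmem _ 4 (by decide) _)
      · exact add_mem (hXmem _ 0 (by decide) _) (hXmem _ 2 (by decide) _)) hf
    have h4 := hcover {1, 2, 4} (by
      rintro g hg
      simp only [Set.mem_insert_iff, Set.mem_singleton_iff] at hg
      rcases hg with rfl | rfl | rfl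
      · exact (by rw [mul_comm]; exact hXmem _ 1 (by decide) _)
      · exact add_mem (hXmem _ 1 (by decide) _)
          (by rw [mul_comm]; exact hXmem _ 4 (by decide) _)
      · exact add_mem (by rw [mul_comm]; exact hXmem _ 4 (by decide) _)
          (hXmem _ 2 (by decide) _)) hf
    have h5 := hcover {1, 3, 4} (by
      rintro g hg
      simp only [Set.mem_insert_iff, Set.mem_singleton_iff] at hg
      rcases hg with rfl | rfl | rfl
      · exact (by rw [mul_comm]; exact hXmem _ 1 (by decide) _)
      · exact add_mem (hXmem _ 1 (by decide) _) (hXmem _ 3 (by decide) _)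
      · exact add_mem (by rw [mul_comm]; exact hXmem _ 4 (by decide) _)
          (by rw [mul_comm]; exact hXmem _ 3 (by decide) _)) hf
    -- rewrite the edge ideal as a monomial ideal
    have hEdge : Ideal.span ({X 0 * X 1, X 1 * X 2, X 2 * X 3, X 3 * X 4, X 4 * X 0} :
        Set (MvPolynomial (Fin 5) k)) =
        Ideal.span ((fun s => monomial s (1 : k)) ''
          ({Finsupp.single 0 1 + Finsupp.single 1 1,
            Finsupp.single 1 1 + Finsupp.single 2 1,
            Finsupp.single 2 1 + Finsupp.single 3 1,
            Finsupp.single 3 1 + Finsupp.single 4 1,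
            Finsupp.single 4 1 + Finsupp.single 0 1} : Set (Fin 5 →₀ ℕ))) := by
      have hXX : ∀ i j : Fin 5, (X i * X j : MvPolynomial (Fin 5) k) =
          monomial (Finsupp.single i 1 + Finsupp.single j 1) 1 := by
        intro i j
        rw [← pow_one (X i (R := k)), ← pow_one (X j (R := k)), X_pow_eq_monomial,
          X_pow_eq_monomial, monomial_mul, one_mul]
      congr 1
      simp only [Set.image_insert_eq, Set.image_singleton, hXX]
    rw [hEdge, mem_ideal_span_monomial_image]
    intro m hm
    rw [mem_ideal_span_X_image] at h1 h2 h3 h4 h5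
    have a1 := h1 m hm
    have a2 := h2 m hm
    have a3 := h3 m hm
    have a4 := h4 m hm
    have a5 := h5 m hm
    simp only [Finset.coe_insert, Finset.coe_singleton, Set.mem_insert_iff,
      Set.mem_singleton_iff, exists_eq_or_imp, exists_eq_left] at a1 a2 a3 a4 a5
    have key : (m 0 ≠ 0 ∧ m 1 ≠ 0) ∨ (m 1 ≠ 0 ∧ m 2 ≠ 0) ∨ (m 2 ≠ 0 ∧ m 3 ≠ 0)
        ∨ (m 3 ≠ 0 ∧ m 4 ≠ 0) ∨ (m 4 ≠ 0 ∧ m 0 ≠ 0) := by omega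
    have hle : ∀ i j : Fin 5, i ≠ j → m i ≠ 0 → m j ≠ 0 →
        Finsupp.single i 1 + Finsupp.single j 1 ≤ m := by
      intro i j hne hi hj
      rw [Finsupp.le_def]
      intro l
      simp only [Finsupp.add_apply, Finsupp.single_apply]
      split_ifs with h h' h'
      · exact absurd (h.trans h'.symm) hne
      · subst h; omega
      · subst h'; omega
      · omega
    rcases key with ⟨h, h'⟩ | ⟨h, h'⟩ | ⟨h, h'⟩ | ⟨h, h'⟩ | ⟨h, h'⟩
    · exact ⟨_, Or.inl rfl, hle 0 1 (by decide) h h'⟩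
    · exact ⟨_, Or.inr (Or.inl rfl), hle 1 2 (by decide) h h'⟩
    · exact ⟨_, Or.inr (Or.inr (Or.inl rfl)), hle 2 3 (by decide) h h'⟩
    · exact ⟨_, Or.inr (Or.inr (Or.inr (Or.inl rfl))), hle 3 4 (by decide) h h'⟩
    · exact ⟨_, Or.inr (Or.inr (Or.inr (Or.inr rfl))), hle 4 0 (by decide) h h'⟩
end

section
/- Let G be a finite simple graph on vertices x₁,…,xₙ and let G' be the whisker graph on G, obtained by adding new vertices y₁,…,yₙ and the edges x₁y₁,…,xₙyₙ. Then {x₁,…,xₙ} is a minimal vertex cover of G' of maximum cardinality; in fact every minimal vertex cover of G' has cardinality n. -/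
open SimpleGraph MvPolynomial

/-- The whisker graph on `G`: to each vertex `v` (as `Sum.inl v`) a new terminal
vertex `Sum.inr v` is attached. -/
def whiskerGraph {V : Type*} (G : SimpleGraph V) : SimpleGraph (V ⊕ V) :=
  SimpleGraph.fromEdgeSet
    ({e | ∃ u v : V, G.Adj u v ∧ e = s(Sum.inl u, Sum.inl v)} ∪
     {e | ∃ v : V, e = s(Sum.inl v, Sum.inr v)})

lemma whisker_adj {V : Type*} (G : SimpleGraph V) (a b : V ⊕ V) :
    (whiskerGraph G).Adj a b ↔
      (∃ u v, G.Adj u v ∧ a = Sum.inl u ∧ b = Sum.inl v) ∨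
      (∃ v, a = Sum.inl v ∧ b = Sum.inr v) ∨
      (∃ v, a = Sum.inr v ∧ b = Sum.inl v) := by
  simp only [whiskerGraph, fromEdgeSet_adj, Set.mem_union, Set.mem_setOf_eq, Sym2.eq,
    Sym2.rel_iff', Prod.mk.injEq, Prod.swap_prod_mk]
  constructor
  · rintro ⟨h | ⟨v, ⟨h1, h2⟩ | ⟨h1, h2⟩⟩, hne⟩
    · obtain ⟨u, v, huv, ⟨h1, h2⟩ | ⟨h1, h2⟩⟩ := h
      · exact Or.inl ⟨u, v, huv, h1, h2⟩
      · exact Or.inl ⟨v, u, huv.symm, h1, h2⟩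
    · exact Or.inr (Or.inl ⟨v, h1, h2⟩)
    · exact Or.inr (Or.inr ⟨v, h1, h2⟩)
  · rintro (⟨u, v, huv, rfl, rfl⟩ | ⟨v, rfl, rfl⟩ | ⟨v, rfl, rfl⟩)
    · exact ⟨Or.inl ⟨u, v, huv, Or.inl ⟨rfl, rfl⟩⟩, by simp [huv.ne]⟩
    · exact ⟨Or.inr ⟨v, Or.inl ⟨rfl, rfl⟩⟩, by simp⟩
    · exact ⟨Or.inr ⟨v, Or.inr ⟨rfl, rfl⟩⟩, by simp⟩

lemma whisker_adj_pendant {V : Type*} (G : SimpleGraph V) (v : V) :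
    (whiskerGraph G).Adj (Sum.inl v) (Sum.inr v) := by
  rw [whisker_adj]
  exact Or.inr (Or.inl ⟨v, rfl, rfl⟩)

lemma minvc_card {V : Type*} [Fintype V] (G : SimpleGraph V) (C : Set (V ⊕ V))
    (hC : IsMinVC (whiskerGraph G) C) : C.ncard = Fintype.card V := by
  classical
  obtain ⟨hcov, hmin⟩ := hC
  -- each v contributes at least one vertex
  have hone : ∀ v : V, Sum.inl v ∈ C ∨ Sum.inr v ∈ C := fun v =>
    hcov (whisker_adj_pendant G v)
  -- not both
  have hnotboth : ∀ v : V, Sum.inl v ∈ C → Sum.inr v ∉ C := by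
    intro v hl hr
    apply hmin (C \ {Sum.inr v})
      ⟨Set.diff_subset, fun hsub => (hsub hr).2 rfl⟩
    intro a b hab
    rcases hcov hab with ha | hb
    · by_cases h : a = Sum.inr v
      · subst h
        rw [whisker_adj] at hab
        rcases hab with ⟨u, w, _, h1, _⟩ | ⟨w, h1, _⟩ | ⟨w, h1, h2⟩
        · exact absurd h1 (by simp)
        · exact absurd h1 (by simp)
        · cases h1; cases h2; exact Or.inr ⟨hl, by simp⟩
      · exact Or.inl ⟨ha, h⟩
    · by_cases h : b = Sum.inr v
      · subst h
        rw [whisker_adj] at hab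
        rcases hab with ⟨u, w, _, _, h2⟩ | ⟨w, h1, h2⟩ | ⟨w, _, h2⟩
        · exact absurd h2 (by simp)
        · cases h2; cases h1; exact Or.inl ⟨hl, by simp⟩
        · exact absurd h2 (by simp)
      · exact Or.inr ⟨hb, h⟩
  set f : V → V ⊕ V := fun v => if Sum.inl v ∈ C then Sum.inl v else Sum.inr v with hf
  have hinj : Function.Injective f := by
    intro a b hab
    simp only [hf] at hab
    split_ifs at hab <;> simp_all
  have hrange : Set.range f = C := by
    ext x
    constructor
    · rintro ⟨v, rfl⟩
      simp only [hf]
      split_ifs with h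
      · exact h
      · exact (hone v).resolve_left h
    · intro hx
      cases x with
      | inl v => exact ⟨v, by simp [hf, hx]⟩
      | inr v =>
        refine ⟨v, ?_⟩
        have : Sum.inl v ∉ C := fun h => hnotboth v h hx
        simp [hf, this]
  rw [← hrange, Set.ncard_eq_toFinset_card', Set.toFinset_range,
    Finset.card_image_of_injective _ hinj, Finset.card_univ]

/-- In the whisker graph on `G`, the set of old vertices is a maximum minimal vertex
cover; in fact every minimal vertex cover has cardinality `n = |V(G)|`. -/
theorem stmt_14 {V : Type*} [Fintype V] (G : SimpleGraph V) :
    IsMaxMinVC (whiskerGraph G) (Set.range Sum.inl) ∧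
      ∀ C : Set (V ⊕ V), IsMinVC (whiskerGraph G) C → C.ncard = Fintype.card V := by
  have hmvc : IsMinVC (whiskerGraph G) (Set.range Sum.inl) := by
    constructor
    · intro a b hab
      rw [whisker_adj] at hab
      rcases hab with ⟨u, w, _, rfl, _⟩ | ⟨w, rfl, _⟩ | ⟨w, _, rfl⟩
      · exact Or.inl ⟨u, rfl⟩
      · exact Or.inl ⟨w, rfl⟩
      · exact Or.inr ⟨w, rfl⟩
    · rintro D ⟨hsub, hne⟩ hvc
      obtain ⟨x, hx, hxD⟩ := Set.exists_of_ssubset ⟨hsub, hne⟩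
      obtain ⟨v, rfl⟩ := hx
      rcases hvc (whisker_adj_pendant G v) with h | h
      · exact hxD h
      · obtain ⟨w, hw⟩ := hsub h
        exact absurd hw (by simp)
  have hcard := minvc_card G
  refine ⟨⟨hmvc, fun D hD => ?_⟩, hcard⟩
  rw [hcard D hD, hcard _ hmvc]
end

section
/- Let G be a finite simple graph, x a vertex of G, and y a new vertex not in V(G). Let G' = G ∪ {xy} be the graph obtained by attaching the whisker xy. If every maximum minimal vertex cover of G contains x, then the maximum cardinality of a minimal vertex cover of G' equals the maximum cardinality of a minimal vertex cover of G. -/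
open SimpleGraph MvPolynomial

lemma IsVC.mono' {V : Type*} {G : SimpleGraph V} {C D : Set V} (h : IsVC G C) (hs : C ⊆ D) :
    IsVC G D := fun u v huv => (h huv).imp (@hs u) (@hs v)

lemma exists_minVC_subset_aux {V : Type*} [Fintype V] (G : SimpleGraph V) :
    ∀ n (C : Set V), C.ncard ≤ n → IsVC G C → ∃ D, D ⊆ C ∧ IsMinVC G D := by
  intro n
  induction n with
  | zero =>
    intro C hC h
    have hC0 : C = ∅ := (Set.ncard_eq_zero C.toFinite).mp (Nat.le_zero.mp hC)
    refine ⟨C, subset_rfl, h, fun D hD _ => ?_⟩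
    rw [hC0] at hD
    exact hD.ne (Set.subset_empty_iff.mp hD.subset)
  | succ n ih =>
    intro C hC h
    by_cases hmin : ∃ D, D ⊂ C ∧ IsVC G D
    · obtain ⟨D, hDC, hD⟩ := hmin
      have hn : D.ncard ≤ n := by
        have := Set.ncard_lt_ncard hDC C.toFinite
        omega
      obtain ⟨E, hED, hE⟩ := ih D hn hD
      exact ⟨E, hED.trans hDC.subset, hE⟩
    · exact ⟨C, subset_rfl, h, fun D hD hDVC => hmin ⟨D, hD, hDVC⟩⟩

lemma exists_minVC_subset {V : Type*} [Fintype V] {G : SimpleGraph V} {C : Set V}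
    (h : IsVC G C) : ∃ D, D ⊆ C ∧ IsMinVC G D :=
  exists_minVC_subset_aux G C.ncard C le_rfl h

/-- Attaching a whisker `xy` (with `y` a new vertex) at a vertex `x` that belongs to all
maximum minimal vertex covers of `G` does not change the maximum cardinality of a
minimal vertex cover. -/
theorem stmt_15 {V : Type*} [Fintype V] (G : SimpleGraph V) (x y : V)
    (hx : x ∈ G.support) (hy : y ∉ G.support) (hxy : x ≠ y)
    (hall : ∀ C : Set V, IsMaxMinVC G C → x ∈ C) :
    sSup {n : ℕ | ∃ C : Set V,
        IsMinVC (G ⊔ SimpleGraph.fromEdgeSet {s(x, y)}) C ∧ C.ncard = n} =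
      sSup {n : ℕ | ∃ C : Set V, IsMinVC G C ∧ C.ncard = n} := by
  set G' := G ⊔ SimpleGraph.fromEdgeSet {s(x, y)} with hG'
  -- basic adjacency facts
  have hG'adj : ∀ u v : V, G'.Adj u v ↔ G.Adj u v ∨ (s(u, v) = s(x, y) ∧ u ≠ v) := by
    intro u v
    simp [hG', SimpleGraph.fromEdgeSet_adj]
  have hG'xy : G'.Adj x y := (hG'adj x y).mpr (Or.inr ⟨rfl, hxy⟩)
  have hyG : ∀ v : V, ¬ G.Adj y v := by
    intro v hv
    exact hy ⟨v, hv⟩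
  -- the RHS set
  set S : Set ℕ := {n : ℕ | ∃ C : Set V, IsMinVC G C ∧ C.ncard = n} with hS
  set S' : Set ℕ := {n : ℕ | ∃ C : Set V,
      IsMinVC G' C ∧ C.ncard = n} with hS'
  have hSbdd : BddAbove S := by
    refine ⟨Fintype.card V, fun n hn => ?_⟩
    obtain ⟨C, _, rfl⟩ := hn
    exact Set.ncard_le_ncard (Set.subset_univ C) Set.finite_univ |>.trans
      (by simp [Set.ncard_univ])
  have hSne : S.Nonempty := by
    obtain ⟨D, _, hD⟩ := exists_minVC_subset (G := G) (C := Set.univ)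
      (fun u v _ => Or.inl trivial)
    exact ⟨D.ncard, D, hD, rfl⟩
  set m := sSup S with hm
  have hmem : m ∈ S := Nat.sSup_mem hSne hSbdd
  obtain ⟨C₀, hC₀min, hC₀card⟩ := hmem
  have hle_m : ∀ D : Set V, IsMinVC G D → D.ncard ≤ m := fun D hD =>
    le_csSup hSbdd ⟨D, hD, rfl⟩
  have hC₀max : IsMaxMinVC G C₀ := ⟨hC₀min, fun D hD => hC₀card ▸ hle_m D hD⟩
  have hxC₀ : x ∈ C₀ := hall C₀ hC₀max
  -- no minimal VC of G contains y
  have hyNotMem : ∀ C : Set V, IsMinVC G C → y ∉ C := by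
    intro C hC hyC
    refine hC.2 (C \ {y}) (Set.sdiff_singleton_ssubset.mpr hyC) ?_
    intro u v huv
    rcases hC.1 huv with h1 | h1
    · exact Or.inl ⟨h1, fun h => hyG v (h ▸ huv)⟩
    · exact Or.inr ⟨h1, fun h => hyG u (h ▸ huv.symm)⟩
  -- a minimal VC of G avoiding x has ncard < m
  have hsmall : ∀ D : Set V, IsMinVC G D → x ∉ D → D.ncard + 1 ≤ m := by
    intro D hD hxD
    have h1 : D.ncard ≤ m := hle_m D hD
    rcases eq_or_lt_of_le h1 with h2 | h2
    · exact absurd (hall D ⟨hD, fun E hE => h2 ▸ hle_m E hE⟩) hxD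
    · omega
  -- G'-covers cover G
  have hG'toG : ∀ C : Set V, IsVC G' C → IsVC G C := by
    intro C hC u v huv
    exact hC ((hG'adj u v).mpr (Or.inl huv))
  -- lower bound: C₀ is a minimal VC of G'
  have hC₀G' : IsMinVC G' C₀ := by
    constructor
    · intro u v huv
      rcases (hG'adj u v).mp huv with h1 | ⟨h1, _⟩
      · exact hC₀min.1 h1
      · rcases Sym2.eq_iff.mp h1 with ⟨rfl, rfl⟩ | ⟨rfl, rfl⟩
        · exact Or.inl hxC₀
        · exact Or.inr hxC₀
    · intro D hD hDVC
      exact hC₀min.2 D hD (hG'toG D hDVC)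
  -- upper bound
  have hub : ∀ n ∈ S', n ≤ m := by
    rintro n ⟨C, hCmin, rfl⟩
    have hCVC : IsVC G C := hG'toG C hCmin.1
    have hxyC : x ∈ C ∨ y ∈ C := hCmin.1 hG'xy
    by_cases hyC : y ∈ C
    · -- y ∈ C : then D := C \ {y} is a minimal VC of G avoiding x
      set D := C \ {y} with hD
      have hDVC : IsVC G D := by
        intro u v huv
        rcases hCVC huv with h1 | h1
        · exact Or.inl ⟨h1, fun h => hyG v (h ▸ huv)⟩
        · exact Or.inr ⟨h1, fun h => hyG u (h ▸ huv.symm)⟩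
      have hxD : x ∉ D := by
        intro hxD
        refine hCmin.2 D (Set.sdiff_singleton_ssubset.mpr hyC) ?_
        intro u v huv
        rcases (hG'adj u v).mp huv with h1 | ⟨h1, _⟩
        · exact hDVC h1
        · rcases Sym2.eq_iff.mp h1 with ⟨rfl, rfl⟩ | ⟨rfl, rfl⟩
          · exact Or.inl hxD
          · exact Or.inr hxD
      have hDmin : IsMinVC G D := by
        refine ⟨hDVC, fun E hE hEVC => ?_⟩
        have hsub : E ∪ {y} ⊂ C := by
          constructor
          · apply Set.union_subset (hE.subset.trans Set.diff_subset)
            simpa using hyC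
          · intro hsub
            obtain ⟨d, hdD, hdE⟩ := Set.exists_of_ssubset hE
            exact hdE ((hsub hdD.1).resolve_right hdD.2)
        refine hCmin.2 _ hsub ?_
        intro u v huv
        rcases (hG'adj u v).mp huv with h1 | ⟨h1, _⟩
        · exact (hEVC h1).imp (fun h => Or.inl h) (fun h => Or.inl h)
        · rcases Sym2.eq_iff.mp h1 with ⟨rfl, rfl⟩ | ⟨rfl, rfl⟩
          · exact Or.inr (Or.inr rfl)
          · exact Or.inl (Or.inr rfl)
      have hcard : D.ncard + 1 = C.ncard :=
        Set.ncard_diff_singleton_add_one hyC C.toFinite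
      have := hsmall D hDmin hxD
      omega
    · -- y ∉ C
      have hxC : x ∈ C := hxyC.resolve_right hyC
      by_cases hmin : ∃ E, E ⊂ C ∧ IsVC G E
      · obtain ⟨E, hEC, hEVC⟩ := hmin
        -- E is not a VC of G', so it misses the edge xy
        have hnot : ¬ IsVC G' E := hCmin.2 E hEC
        have hxE : x ∉ E := by
          intro hxE
          apply hnot
          intro u v huv
          rcases (hG'adj u v).mp huv with h1 | ⟨h1, _⟩
          · exact hEVC h1
          · rcases Sym2.eq_iff.mp h1 with ⟨rfl, rfl⟩ | ⟨rfl, rfl⟩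
            · exact Or.inl hxE
            · exact Or.inr hxE
        -- F := C \ {x} is a minimal VC of G avoiding x
        set F := C \ {x} with hF
        have hEF : E ⊆ F := fun v hv => ⟨hEC.subset hv, fun h => hxE (h ▸ hv)⟩
        have hFVC : IsVC G F := hEVC.mono' hEF
        have hFmin : IsMinVC G F := by
          refine ⟨hFVC, fun E' hE' hE'VC => ?_⟩
          have hsub : E' ∪ {x} ⊂ C := by
            constructor
            · apply Set.union_subset (hE'.subset.trans Set.diff_subset)
              simpa using hxC
            · intro hsub
              obtain ⟨d, hdD, hdE⟩ := Set.exists_of_ssubset hE'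
              exact hdE ((hsub hdD.1).resolve_right hdD.2)
          refine hCmin.2 _ hsub ?_
          intro u v huv
          rcases (hG'adj u v).mp huv with h1 | ⟨h1, _⟩
          · exact (hE'VC h1).imp (fun h => Or.inl h) (fun h => Or.inl h)
          · rcases Sym2.eq_iff.mp h1 with ⟨rfl, rfl⟩ | ⟨rfl, rfl⟩
            · exact Or.inl (Or.inr rfl)
            · exact Or.inr (Or.inr rfl)
        have hxF : x ∉ F := fun h => h.2 rfl
        have hcard : F.ncard + 1 = C.ncard :=
          Set.ncard_diff_singleton_add_one hxC C.toFinite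
        have := hsmall F hFmin hxF
        omega
      · -- C itself is a minimal VC of G
        have : IsMinVC G C := ⟨hCVC, fun E hE hEVC => hmin ⟨E, hE, hEVC⟩⟩
        exact hle_m C this
  have hS'ne : S'.Nonempty := ⟨m, C₀, hC₀G', hC₀card⟩
  have hS'bdd : BddAbove S' := ⟨m, hub⟩
  exact le_antisymm (csSup_le hS'ne hub) (le_csSup hS'bdd ⟨C₀, hC₀G', hC₀card⟩)
end
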